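/- For every applicant set I, the set of individuals chosen by the EWS-last sequential rule under ρ* but not by the Over-and-Above rule under ρ̊ equals the unique maximal set of individuals who suffer from a violation of the Equality Code under the Over-and-Above rule with ρ̊ for I. -/

import Mathlib

attribute [local instance] Classical.propDecidable

noncomputable section

variable {ι R : Type*} [Fintype ι] [DecidableEq ι] [Fintype R] [DecidableEq R]

/-- Eligibility sets: everyone is eligible for the open category (`none`),
and `elig c` is the set of members of VR-protected category `c`. -/
def eligOf (elig : R → Finset ι) : Option R → Finset ι
  | none => (Finset.univ : Finset ι)
  | some c => elig c

/-- Aggregate choice: all individuals chosen across all categories. -/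
def aggC (C : Finset ι → Option R → Finset ι) (I : Finset ι) : Finset ι :=
  Finset.univ.biUnion fun v => C I v

/-- `C` is a choice rule for capacities `q` and eligibility `elig`: each category chooses
eligible applicants up to capacity, and no individual is chosen by two categories. -/
def IsChoiceRule (q : Option R → ℕ) (elig : R → Finset ι)
    (C : Finset ι → Option R → Finset ι) : Prop :=
  ∀ I : Finset ι,
    (∀ v, C I v ⊆ I ∩ eligOf elig v) ∧
    (∀ v, (C I v).card ≤ q v) ∧
    (∀ v v', v ≠ v' → Disjoint (C I v) (C I v'))

/-- Non-wastefulness: no position remains idle while an eligible applicant is unchosen. -/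
def NonWasteful (q : Option R → ℕ) (elig : R → Finset ι)
    (C : Finset ι → Option R → Finset ι) : Prop :=
  ∀ (I : Finset ι) (v : Option R) (j : ι),
    j ∈ I → j ∉ aggC C I → (C I v).card < q v → j ∉ eligOf elig v

/-- No justified envy: a chosen individual outscores every eligible entirely-unchosen applicant. -/
def NoJustifiedEnvy (σ : ι → ℝ) (elig : R → Finset ι)
    (C : Finset ι → Option R → Finset ι) : Prop :=
  ∀ (I : Finset ι) (v : Option R) (i j : ι),
    i ∈ C I v → j ∈ I → j ∈ eligOf elig v → j ∉ aggC C I → σ j < σ i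

/-- Compliance with VR protections: a VR recipient implies the open category is full, with
every open-category recipient scoring strictly higher. -/
def CompliesVR (σ : ι → ℝ) (q : Option R → ℕ)
    (C : Finset ι → Option R → Finset ι) : Prop :=
  ∀ (I : Finset ι) (c : R) (i : ι), i ∈ C I (some c) →
    (C I none).card = q none ∧ ∀ j ∈ C I none, σ i < σ j

/-- The (at most) `k` highest merit-score members of `S`. -/
def topK (σ : ι → ℝ) (S : Finset ι) (k : ℕ) : Finset ι :=
  S.filter fun i => (S.filter fun j => σ i ≤ σ j).card ≤ k

/-- The Over-and-Above choice rule: open positions go to the top-merit applicants; then each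
VR category's quota is filled by the highest-merit remaining eligible members. -/
def OA (σ : ι → ℝ) (q : Option R → ℕ) (elig : R → Finset ι)
    (I : Finset ι) : Option R → Finset ι
  | none => topK σ I (q none)
  | some c => topK σ ((I \ topK σ I (q none)) ∩ elig c) (q (some c))

/-- The sequential choice rule: categories are processed in the order given by the list,
each filling its positions by serial dictatorship on the remaining eligible applicants. -/
def seqAssign (σ : ι → ℝ) (q : Option R → ℕ) (elig : R → Finset ι) :
    List (Option R) → Finset ι → Option R → Finset ι
  | [], _, _ => ∅
  | v :: rest, I, u =>
    let chosen := topK σ (I ∩ eligOf elig v) (q v)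
    if u = v then chosen else seqAssign σ q elig rest (I \ chosen) u

/-- Eligibility sets induced by a membership profile `ρ`. -/
def eligρ (ρ : ι → Finset R) (c : R) : Finset ι :=
  Finset.univ.filter fun i => c ∈ ρ i

/-- Aggregate outcome of the Over-and-Above rule under membership profile `ρ`. -/
def aggOA (σ : ι → ℝ) (q : Option R → ℕ) (ρ : ι → Finset R) (I : Finset ι) : Finset ι :=
  aggC (OA σ q (eligρ ρ)) I

/-- The profile `(ρ₋ⱼ, ρ̃ⱼ)`: each member of `J` is reassigned membership `{e}` only. -/
def updProf (ρ : ι → Finset R) (e : R) (J : Finset ι) : ι → Finset R :=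
  fun i => if i ∈ J then {e} else ρ i

/-- `J ⊆ 𝒥 ∩ I` suffers from a violation of the Equality Code under the Over-and-Above rule
with profile `ρ` for `I`: every member of `J` is unchosen under `ρ` but chosen once the
members of `J` are reassigned membership `{e}`. -/
def Suffers (σ : ι → ℝ) (q : Option R → ℕ) (ρ : ι → Finset R) (e : R)
    (JJ I J : Finset ι) : Prop :=
  J ⊆ JJ ∩ I ∧ ∀ j ∈ J, j ∉ aggOA σ q ρ I ∧ j ∈ aggOA σ q (updProf ρ e J) I

/-- `J` is a maximal set of individuals suffering from a violation of the Equality Code. -/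
def MaximalSuffers (σ : ι → ℝ) (q : Option R → ℕ) (ρ : ι → Finset R) (e : R)
    (JJ I J : Finset ι) : Prop :=
  J ⊆ (JJ ∩ I) \ aggOA σ q ρ I ∧
  Suffers σ q ρ e JJ I J ∧
  ∀ J' ⊆ (JJ ∩ I) \ aggOA σ q ρ I, J ⊂ J' →
    ¬ Suffers σ q ρ e JJ I J' ∧ J ⊆ aggOA σ q (updProf ρ e J') I

/-- The expanded profile `ρ*`: members of `𝒥` get an additional membership of `e`. -/
def ρstar (ρ : ι → Finset R) (e : R) (JJ : Finset ι) : ι → Finset R :=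
  fun i => if i ∈ JJ then insert e (ρ i) else ρ i

/-- Aggregate outcome of the sequential choice rule under profile `ρ` and the given order. -/
def aggSeq (σ : ι → ℝ) (q : Option R → ℕ) (ρ : ι → Finset R)
    (order : List (Option R)) (I : Finset ι) : Finset ι :=
  Finset.univ.biUnion (seqAssign σ q (eligρ ρ) order I)

/-- The EWS-last order of precedence: open first, caste-based categories (listed by `L`), `e` last. -/
def ewsLastOrder (e : R) (L : List R) : List (Option R) :=
  (none : Option R) :: (L.map some ++ [some e])

/-!
The caste-based categories do not overlap, so processing them one after another chooses the same
applicants as the Over-and-Above rule. The two outcomes therefore differ only in category `e`: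
under `ρ*` its pool is the Over-and-Above pool `P` of original members of `e` enlarged by the set
`K` of unchosen members of `𝒥`, so the new recipients form `D = top_k(K ∪ P) ∩ K`. Reassigning the
members of `J ⊆ K` to `{e}` gets all of them chosen exactly when `J ⊆ top_k(J ∪ P)`. The set `D`
has this property, and once `D ⊆ J ⊆ K` the top `k` of `K ∪ P` already lie in `J ∪ P`; with
distinct scores this gives `top_k(J ∪ P) = top_k(K ∪ P)`, so `J ⊆ D`. Hence `D` is the unique
maximal suffering set.
-/

open Finset

def meritRank (σ : ι → ℝ) (S : Finset ι) (i : ι) : ℕ :=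
  #(S.filter fun j => σ i ≤ σ j)

section TopK

variable {σ : ι → ℝ} {S T : Finset ι} {k : ℕ} {i : ι}

omit [Fintype ι] [DecidableEq ι]

theorem mem_topK : i ∈ topK σ S k ↔ i ∈ S ∧ meritRank σ S i ≤ k := mem_filter

theorem topK_subset : topK σ S k ⊆ S := filter_subset _ _

theorem one_le_meritRank (hi : i ∈ S) : 1 ≤ meritRank σ S i :=
  card_pos.2 ⟨i, mem_filter.2 ⟨hi, le_rfl⟩⟩

theorem meritRank_le_card : meritRank σ S i ≤ #S := card_filter_le _ _

theorem meritRank_mono (hST : S ⊆ T) : meritRank σ S i ≤ meritRank σ T i :=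
  card_le_card (filter_subset_filter _ hST)

theorem mem_topK_of_subset (hST : S ⊆ T) (hi : i ∈ S) (hiT : i ∈ topK σ T k) :
    i ∈ topK σ S k :=
  mem_topK.2 ⟨hi, (meritRank_mono hST).trans (mem_topK.1 hiT).2⟩

theorem meritRank_lt_meritRank {a b : ι} (ha : a ∈ S) (hab : σ a < σ b) :
    meritRank σ S b < meritRank σ S a := by
  refine card_lt_card ⟨fun j hj => ?_, fun h => ?_⟩
  · exact mem_filter.2 ⟨(mem_filter.1 hj).1, hab.le.trans (mem_filter.1 hj).2⟩
  · exact hab.not_ge (mem_filter.1 (h (mem_filter.2 ⟨ha, le_rfl⟩))).2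

theorem meritRank_injOn (hσ : Function.Injective σ) : Set.InjOn (meritRank σ S) S := by
  intro a ha b hb hab
  rcases lt_trichotomy (σ a) (σ b) with h | h | h
  · exact absurd hab (meritRank_lt_meritRank ha h).ne'
  · exact hσ h
  · exact absurd hab (meritRank_lt_meritRank hb h).ne

theorem image_meritRank (hσ : Function.Injective σ) : S.image (meritRank σ S) = Icc 1 #S := by
  refine eq_of_subset_of_card_le (fun r hr => ?_) ?_
  · obtain ⟨i, hi, rfl⟩ := mem_image.1 hr
    exact mem_Icc.2 ⟨one_le_meritRank hi, meritRank_le_card⟩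
  · rw [Nat.card_Icc, card_image_of_injOn (meritRank_injOn hσ), Nat.add_sub_cancel]

theorem card_topK (hσ : Function.Injective σ) : #(topK σ S k) = min #S k := by
  have hfilter : (Icc 1 #S).filter (· ≤ k) = Icc 1 (min #S k) := by
    ext r; simp only [mem_filter, mem_Icc, le_min_iff]; omega
  calc #(topK σ S k) = #((topK σ S k).image (meritRank σ S)) :=
        (card_image_of_injOn ((meritRank_injOn hσ).mono topK_subset)).symm
    _ = #((S.image (meritRank σ S)).filter (· ≤ k)) := by rw [filter_image]; rfl
    _ = min #S k := by rw [image_meritRank hσ, hfilter, Nat.card_Icc, Nat.add_sub_cancel]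

theorem topK_eq_of_topK_subset (hσ : Function.Injective σ) (hST : S ⊆ T)
    (h : topK σ T k ⊆ S) : topK σ S k = topK σ T k := by
  refine (eq_of_subset_of_card_le (fun i hi => mem_topK_of_subset hST (h hi) hi) ?_).symm
  rw [card_topK hσ, card_topK hσ]
  exact min_le_min_right _ (card_le_card hST)

end TopK

section GoodSets

variable {σ : ι → ℝ} {J K P : Finset ι} {k : ℕ}

omit [Fintype ι]

theorem topK_union_inter_subset_topK_union (hJK : J ⊆ K) (hDJ : topK σ (K ∪ P) k ∩ K ⊆ J) :
    topK σ (K ∪ P) k ∩ K ⊆ topK σ (J ∪ P) k := fun _ hi =>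
  mem_topK_of_subset (union_subset_union_left hJK) (mem_union_left _ (hDJ hi)) (mem_inter.1 hi).1

theorem subset_topK_union_inter (hσ : Function.Injective σ) (hJK : J ⊆ K)
    (hDJ : topK σ (K ∪ P) k ∩ K ⊆ J) (hJ : J ⊆ topK σ (J ∪ P) k) :
    J ⊆ topK σ (K ∪ P) k ∩ K := by
  have htop : topK σ (K ∪ P) k ⊆ J ∪ P := fun i hi =>
    (mem_union.1 (topK_subset hi)).elim
      (fun hiK => mem_union_left _ (hDJ (mem_inter.2 ⟨hi, hiK⟩))) (mem_union_right _)
  rw [← topK_eq_of_topK_subset hσ (union_subset_union_left hJK) htop]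
  exact fun i hi => mem_inter.2 ⟨hJ hi, hJK hi⟩

end GoodSets

def vrChoice (σ : ι → ℝ) (q : Option R → ℕ) (elig : R → Finset ι) (M : Finset R)
    (I : Finset ι) : Finset ι :=
  M.biUnion fun c => topK σ (I ∩ elig c) (q (some c))

section Sequential

variable {σ : ι → ℝ} {q : Option R → ℕ} {elig : R → Finset ι}

omit [Fintype ι] [Fintype R] in
theorem vrChoice_insert (c : R) (M : Finset R) (I : Finset ι) :
    vrChoice σ q elig (insert c M) I = topK σ (I ∩ elig c) (q (some c)) ∪ vrChoice σ q elig M I :=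
  biUnion_insert

omit [Fintype ι] [Fintype R] [DecidableEq R] in
theorem vrChoice_congr {elig' : R → Finset ι} {M : Finset R} (h : ∀ c ∈ M, elig c = elig' c) :
    vrChoice σ q elig M = vrChoice σ q elig' M :=
  funext fun _ => biUnion_congr rfl fun c hc => by rw [h c hc]

omit [Fintype ι] [Fintype R] [DecidableEq R] in
theorem vrChoice_sdiff_of_disjoint {M : Finset R} {I X : Finset ι}
    (h : ∀ c ∈ M, Disjoint X (elig c)) : vrChoice σ q elig M (I \ X) = vrChoice σ q elig M I := by
  refine biUnion_congr rfl fun c hc => ?_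
  rw [sdiff_inter_right_comm,
    sdiff_eq_self_of_disjoint ((h c hc).symm.mono_left inter_subset_right)]

omit [Fintype ι] [Fintype R] [DecidableEq R] in
theorem disjoint_vrChoice {M : Finset R} {I E : Finset ι} (h : ∀ c ∈ M, Disjoint (elig c) E) :
    Disjoint (vrChoice σ q elig M I) E :=
  (disjoint_biUnion_left _ _ _).2 fun c hc =>
    (h c hc).mono_left (topK_subset.trans inter_subset_right)

omit [Fintype ι] [DecidableEq R] in
theorem aggC_OA (I : Finset ι) :
    aggC (OA σ q elig) I = topK σ I (q none) ∪ vrChoice σ q elig univ (I \ topK σ I (q none)) := by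
  ext x
  simp [aggC, OA, vrChoice, Option.exists]

omit [Fintype R] in
theorem seqAssign_eq_empty_of_notMem {order : List (Option R)} {u : Option R} (hu : u ∉ order)
    (I : Finset ι) : seqAssign σ q elig order I u = ∅ := by
  induction order generalizing I with
  | nil => rfl
  | cons v rest ih =>
    rw [List.mem_cons, not_or] at hu
    simp only [seqAssign, if_neg hu.1]
    exact ih hu.2 _

theorem biUnion_seqAssign_nil (I : Finset ι) : univ.biUnion (seqAssign σ q elig [] I) = ∅ := by
  ext
  simp [seqAssign]

theorem biUnion_seqAssign_cons {v : Option R} {rest : List (Option R)} (hv : v ∉ rest)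
    (I : Finset ι) :
    univ.biUnion (seqAssign σ q elig (v :: rest) I) = topK σ (I ∩ eligOf elig v) (q v) ∪
      univ.biUnion (seqAssign σ q elig rest (I \ topK σ (I ∩ eligOf elig v) (q v))) := by
  ext x
  simp only [mem_biUnion, mem_univ, true_and, mem_union, seqAssign]
  constructor
  · rintro ⟨u, hu⟩
    split_ifs at hu
    · exact Or.inl hu
    · exact Or.inr ⟨u, hu⟩
  · rintro (h | ⟨u, hu⟩)
    · exact ⟨v, by simpa using h⟩
    · refine ⟨u, ?_⟩
      rw [if_neg]
      · exact hu
      · rintro rfl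
        simp [seqAssign_eq_empty_of_notMem hv] at hu

theorem biUnion_seqAssign_map_some_append {M : List R} {rest : List (Option R)} (hM : M.Nodup)
    (hdisj : M.Pairwise fun c c' => Disjoint (elig c) (elig c'))
    (hrest : ∀ c ∈ M, some c ∉ rest) (I : Finset ι) :
    univ.biUnion (seqAssign σ q elig (M.map some ++ rest) I) = vrChoice σ q elig M.toFinset I ∪
      univ.biUnion (seqAssign σ q elig rest (I \ vrChoice σ q elig M.toFinset I)) := by
  induction M generalizing I with
  | nil => simp [vrChoice]
  | cons c M ih =>
    rw [List.nodup_cons] at hM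
    rw [List.pairwise_cons] at hdisj
    have hc : some c ∉ M.map some ++ rest := by
      simpa [List.mem_append, hM.1] using hrest c List.mem_cons_self
    rw [List.map_cons, List.cons_append, biUnion_seqAssign_cons hc,
      show eligOf elig (some c) = elig c from rfl,
      ih hM.2 hdisj.2 (fun c' hc' => hrest c' (List.mem_cons_of_mem _ hc')),
      vrChoice_sdiff_of_disjoint fun c' hc' => (hdisj.1 c' (List.mem_toFinset.1 hc')).mono_left
        (topK_subset.trans inter_subset_right),
      List.toFinset_cons, vrChoice_insert, sdiff_sdiff_left, union_assoc]
    rfl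

theorem biUnion_seqAssign_ewsLastOrder {e : R} {L : List R} (hL : L.Nodup) (heL : e ∉ L)
    (hdisj : L.Pairwise fun c c' => Disjoint (elig c) (elig c')) (I : Finset ι) :
    univ.biUnion (seqAssign σ q elig (ewsLastOrder e L) I) = topK σ I (q none) ∪
      (vrChoice σ q elig L.toFinset (I \ topK σ I (q none)) ∪
        topK σ (((I \ topK σ I (q none)) \ vrChoice σ q elig L.toFinset (I \ topK σ I (q none))) ∩
          elig e) (q (some e))) := by
  rw [ewsLastOrder, biUnion_seqAssign_cons (by simp),
    biUnion_seqAssign_map_some_append hL hdisj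
      (by simpa using fun c hc => ne_of_mem_of_not_mem hc heL),
    biUnion_seqAssign_cons List.not_mem_nil, biUnion_seqAssign_nil, union_empty]
  simp only [eligOf, inter_univ]

end Sequential

section Profiles

variable {ρ : ι → Finset R} {e c : R} {JJ J : Finset ι} {i : ι}

omit [Fintype R]

omit [DecidableEq ι] in
theorem mem_eligρ : i ∈ eligρ ρ c ↔ c ∈ ρ i := by
  simp [eligρ]

omit [DecidableEq ι] in
theorem disjoint_eligρ (hρ : ∀ i, #(ρ i) ≤ 1) {c' : R} (hc : c ≠ c') :
    Disjoint (eligρ ρ c) (eligρ ρ c') :=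
  disjoint_left.2 fun i hi hi' => hc (card_le_one.1 (hρ i) c (mem_eligρ.1 hi) c' (mem_eligρ.1 hi'))

theorem eligρ_ρstar_of_ne (hc : c ≠ e) : eligρ (ρstar ρ e JJ) c = eligρ ρ c := by
  ext i
  by_cases h : i ∈ JJ <;> simp [mem_eligρ, ρstar, h, hc]

theorem eligρ_ρstar_self : eligρ (ρstar ρ e JJ) e = JJ ∪ eligρ ρ e := by
  ext i
  by_cases h : i ∈ JJ <;> simp [mem_eligρ, ρstar, h]

theorem eligρ_updProf_of_ne (hc : c ≠ e) : eligρ (updProf ρ e J) c = eligρ ρ c \ J := by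
  ext i
  by_cases h : i ∈ J <;> simp [mem_eligρ, updProf, h, hc]

theorem eligρ_updProf_self : eligρ (updProf ρ e J) e = J ∪ eligρ ρ e := by
  ext i
  by_cases h : i ∈ J <;> simp [mem_eligρ, updProf, h]

end Profiles

section EqualityCode

variable {σ : ι → ℝ} {q : Option R → ℕ} {ρ : ι → Finset R} {e : R} {JJ I J : Finset ι}
  {L : List R}

theorem topK_subset_aggOA : topK σ I (q none) ⊆ aggOA σ q ρ I := by
  rw [aggOA, aggC_OA]
  exact subset_union_left

theorem sdiff_aggOA_subset_sdiff_topK :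
    (JJ ∩ I) \ aggOA σ q ρ I ⊆ I \ topK σ I (q none) :=
  sdiff_subset_sdiff inter_subset_right topK_subset_aggOA

theorem aggOA_eq_union (hLall : ∀ c : R, c ≠ e → c ∈ L) :
    aggOA σ q ρ I = topK σ I (q none) ∪
      (vrChoice σ q (eligρ ρ) L.toFinset (I \ topK σ I (q none)) ∪
        topK σ ((I \ topK σ I (q none)) ∩ eligρ ρ e) (q (some e))) := by
  have huniv : (univ : Finset R) = insert e L.toFinset := by
    ext c
    by_cases hc : c = e <;> simp [hc, hLall]
  rw [aggOA, aggC_OA, huniv, vrChoice_insert, union_comm (topK σ (_ ∩ eligρ ρ e) _)]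

theorem ewsPool_eq (hρ : ∀ i, #(ρ i) ≤ 1) (hJJ : ∀ j ∈ JJ, e ∉ ρ j) (heL : e ∉ L)
    (hLall : ∀ c : R, c ≠ e → c ∈ L) :
    ((I \ topK σ I (q none)) \ vrChoice σ q (eligρ ρ) L.toFinset (I \ topK σ I (q none))) ∩
        (JJ ∪ eligρ ρ e) =
      (JJ ∩ I) \ aggOA σ q ρ I ∪ (I \ topK σ I (q none)) ∩ eligρ ρ e := by
  rw [aggOA_eq_union hLall]
  ext x
  have hxV : x ∈ vrChoice σ q (eligρ ρ) L.toFinset (I \ topK σ I (q none)) → x ∉ eligρ ρ e :=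
    fun hx => disjoint_left.1 (disjoint_vrChoice fun c hc =>
      disjoint_eligρ hρ (ne_of_mem_of_not_mem (List.mem_toFinset.1 hc) heL)) hx
  have hxJJ : x ∈ JJ → x ∉ eligρ ρ e := fun hx h => hJJ x hx (mem_eligρ.1 h)
  have hxP : x ∈ topK σ ((I \ topK σ I (q none)) ∩ eligρ ρ e) (q (some e)) → x ∈ eligρ ρ e :=
    fun hx => (mem_inter.1 (topK_subset hx)).2
  simp only [mem_inter, mem_sdiff, mem_union]
  tauto

theorem aggSeq_ρstar_ewsLastOrder (hρ : ∀ i, #(ρ i) ≤ 1) (hJJ : ∀ j ∈ JJ, e ∉ ρ j)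
    (hLnd : L.Nodup) (heL : e ∉ L) (hLall : ∀ c : R, c ≠ e → c ∈ L) :
    aggSeq σ q (ρstar ρ e JJ) (ewsLastOrder e L) I = topK σ I (q none) ∪
      (vrChoice σ q (eligρ ρ) L.toFinset (I \ topK σ I (q none)) ∪
        topK σ ((JJ ∩ I) \ aggOA σ q ρ I ∪ (I \ topK σ I (q none)) ∩ eligρ ρ e) (q (some e))) := by
  have hne : ∀ c ∈ L, c ≠ e := fun c hc => ne_of_mem_of_not_mem hc heL
  have hdisj :
      L.Pairwise fun c c' => Disjoint (eligρ (ρstar ρ e JJ) c) (eligρ (ρstar ρ e JJ) c') :=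
    hLnd.pairwise_of_forall_ne fun c hc c' hc' hcc' => by
      rw [eligρ_ρstar_of_ne (hne c hc), eligρ_ρstar_of_ne (hne c' hc')]
      exact disjoint_eligρ hρ hcc'
  rw [aggSeq, biUnion_seqAssign_ewsLastOrder hLnd heL hdisj,
    vrChoice_congr fun c hc => eligρ_ρstar_of_ne (hne c (List.mem_toFinset.1 hc)),
    eligρ_ρstar_self, ewsPool_eq hρ hJJ heL hLall]

theorem aggSeq_sdiff_aggOA (hρ : ∀ i, #(ρ i) ≤ 1) (hJJ : ∀ j ∈ JJ, e ∉ ρ j)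
    (hLnd : L.Nodup) (heL : e ∉ L) (hLall : ∀ c : R, c ≠ e → c ∈ L) :
    aggSeq σ q (ρstar ρ e JJ) (ewsLastOrder e L) I \ aggOA σ q ρ I =
      topK σ ((JJ ∩ I) \ aggOA σ q ρ I ∪ (I \ topK σ I (q none)) ∩ eligρ ρ e) (q (some e)) ∩
        ((JJ ∩ I) \ aggOA σ q ρ I) := by
  set K := (JJ ∩ I) \ aggOA σ q ρ I
  obtain ⟨hOpA, hVPA⟩ :=
    union_subset_iff.1 (aggOA_eq_union (σ := σ) (q := q) (ρ := ρ) (I := I) hLall).ge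
  obtain ⟨hVA, hPA⟩ := union_subset_iff.1 hVPA
  rw [aggSeq_ρstar_ewsLastOrder hρ hJJ hLnd heL hLall]
  ext x
  simp only [mem_sdiff, mem_union, mem_inter]
  constructor
  · rintro ⟨hx | hx | hx, hxA⟩
    · exact absurd (hOpA hx) hxA
    · exact absurd (hVA hx) hxA
    · refine ⟨hx, (mem_union.1 (topK_subset hx)).resolve_right fun hxP => hxA ?_⟩
      exact hPA (mem_topK_of_subset subset_union_right hxP hx)
  · rintro ⟨hx, hxK⟩
    exact ⟨Or.inr (Or.inr hx), (mem_sdiff.1 hxK).2⟩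

theorem mem_aggOA_updProf (hJ : J ⊆ I \ topK σ I (q none)) {j : ι} (hj : j ∈ J) :
    j ∈ aggOA σ q (updProf ρ e J) I ↔
      j ∈ topK σ (J ∪ (I \ topK σ I (q none)) ∩ eligρ ρ e) (q (some e)) := by
  have hpool : (I \ topK σ I (q none)) ∩ eligρ (updProf ρ e J) e =
      J ∪ (I \ topK σ I (q none)) ∩ eligρ ρ e := by
    rw [eligρ_updProf_self, inter_union_distrib_left, inter_eq_right.2 hJ]
  have hother :
      j ∉ vrChoice σ q (eligρ (updProf ρ e J)) (univ.erase e) (I \ topK σ I (q none)) := by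
    simp only [vrChoice, mem_biUnion, not_exists, not_and]
    intro c hc hjc
    rw [eligρ_updProf_of_ne (ne_of_mem_erase hc)] at hjc
    exact (mem_sdiff.1 (mem_inter.1 (topK_subset hjc)).2).2 hj
  rw [aggOA, aggC_OA, ← insert_erase (mem_univ e), vrChoice_insert, hpool]
  simp only [mem_union, (mem_sdiff.1 (hJ hj)).2, hother, false_or, or_false]

theorem suffers_iff (hJ : J ⊆ (JJ ∩ I) \ aggOA σ q ρ I) :
    Suffers σ q ρ e JJ I J ↔
      J ⊆ topK σ (J ∪ (I \ topK σ I (q none)) ∩ eligρ ρ e) (q (some e)) := by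
  have hJ' := hJ.trans sdiff_aggOA_subset_sdiff_topK
  constructor
  · rintro ⟨-, hchosen⟩ j hj
    exact (mem_aggOA_updProf hJ' hj).1 (hchosen j hj).2
  · exact fun h => ⟨hJ.trans sdiff_subset,
      fun j hj => ⟨(mem_sdiff.1 (hJ hj)).2, (mem_aggOA_updProf hJ' hj).2 (h hj)⟩⟩

theorem maximalSuffers_topK_inter (hσ : Function.Injective σ) :
    MaximalSuffers σ q ρ e JJ I
      (topK σ ((JJ ∩ I) \ aggOA σ q ρ I ∪ (I \ topK σ I (q none)) ∩ eligρ ρ e) (q (some e)) ∩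
        ((JJ ∩ I) \ aggOA σ q ρ I)) := by
  refine ⟨inter_subset_right, (suffers_iff inter_subset_right).2
    (topK_union_inter_subset_topK_union inter_subset_right subset_rfl), fun J hJK hDJ => ⟨?_, ?_⟩⟩
  · exact fun hJ => hDJ.2 (subset_topK_union_inter hσ hJK hDJ.1 ((suffers_iff hJK).1 hJ))
  · exact fun j hj =>
      (mem_aggOA_updProf (hJK.trans sdiff_aggOA_subset_sdiff_topK) (hDJ.1 hj)).2
        (topK_union_inter_subset_topK_union hJK hDJ.1 hj)

theorem eq_topK_inter_of_maximalSuffers (hσ : Function.Injective σ)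
    (hJ : MaximalSuffers σ q ρ e JJ I J) :
    J = topK σ ((JJ ∩ I) \ aggOA σ q ρ I ∪ (I \ topK σ I (q none)) ∩ eligρ ρ e) (q (some e)) ∩
      ((JJ ∩ I) \ aggOA σ q ρ I) := by
  obtain ⟨hJK, hS, hmax⟩ := hJ
  set K := (JJ ∩ I) \ aggOA σ q ρ I
  set D := topK σ (K ∪ (I \ topK σ I (q none)) ∩ eligρ ρ e) (q (some e)) ∩ K
  have hDJ : D ⊆ J := by
    by_contra hDJ
    have hJDK : J ∪ D ⊆ K := union_subset hJK inter_subset_right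
    obtain ⟨hnS, hJchosen⟩ := hmax _ hJDK (left_lt_sup.2 hDJ)
    refine hnS ((suffers_iff hJDK).2 (union_subset (fun j hj => ?_)
      (topK_union_inter_subset_topK_union hJDK subset_union_right)))
    exact (mem_aggOA_updProf (hJDK.trans sdiff_aggOA_subset_sdiff_topK) (mem_union_left _ hj)).1
      (hJchosen hj)
  exact (subset_topK_union_inter hσ hJK hDJ ((suffers_iff hJK).1 hS)).antisymm hDJ

end EqualityCode

/-- the individuals chosen by the EWS-last sequential rule under `ρ*` but not
by the Over-and-Above rule under `ρ̊` form exactly the unique maximal set of individuals who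
suffer from a violation of the Equality Code under the Over-and-Above rule with `ρ̊`. -/
theorem ewsLast_diff_eq_maximal_suffers (σ : ι → ℝ) (hσ : Function.Injective σ)
    (q : Option R → ℕ) (ρ : ι → Finset R) (hρ : ∀ i, (ρ i).card ≤ 1) (e : R)
    (JJ : Finset ι) (hJJ : ∀ j ∈ JJ, (ρ j).Nonempty ∧ e ∉ ρ j)
    (L : List R) (hLnd : L.Nodup) (heL : e ∉ L) (hLall : ∀ c : R, c ≠ e → c ∈ L) :
    ∀ I : Finset ι,
      MaximalSuffers σ q ρ e JJ I
        (aggSeq σ q (ρstar ρ e JJ) (ewsLastOrder e L) I \ aggOA σ q ρ I) ∧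
      ∀ J : Finset ι, MaximalSuffers σ q ρ e JJ I J →
        J = aggSeq σ q (ρstar ρ e JJ) (ewsLastOrder e L) I \ aggOA σ q ρ I := by
  intro I
  rw [aggSeq_sdiff_aggOA hρ (fun j hj => (hJJ j hj).2) hLnd heL hLall]
  exact ⟨maximalSuffers_topK_inter hσ, fun J => eq_topK_inter_of_maximalSuffers hσ⟩
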